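/- Let (z_t), (f_t), (g_t), (h_t), (α_t) be nonnegative adapted processes with E[z_{t+1}|F_t] ≤ (1+f_t) z_t + g_t - α_t h_t a.s., Σ f_t < ∞ a.s., Σ g_t < ∞ a.s., and Σ α_t = ∞ a.s. Suppose there is a Class B function η : ℝ₊ → ℝ₊ with h_t ≥ η(z_t) a.s. for all t. Then z_t → 0 almost surely as t → ∞. -/

import Mathlib

/-!
Dividing by `P t = ∏_{s<t} (1 + f s)` turns the recursion into the supermartingale
`Y t = z t / P t + ∑_{s<t} (α s h s - g s) / P (s + 1)`, which is bounded below by `-∑ g`.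
Stopped before the partial sums of `g` exceed a level `n`, it is an integrable supermartingale
bounded below by `-n`, hence converges a.s.; as `∑ g < ∞` a.s., for `n` large it is `Y` itself.
Since `P` converges, `z t` converges and `∑ α t h t < ∞` (Robbins–Siegmund). If the limit `L` were
positive, `z t` would eventually stay in `[L/2, 2L]`, where `η ≥ c > 0`; then
`∑ α t ≤ c⁻¹ ∑ α t h t < ∞`, a contradiction.
-/

open MeasureTheory Filter

def ClassB (η : ℝ → ℝ) : Prop :=
  η 0 = 0 ∧ ∀ ε M : ℝ, 0 < ε → ε ≤ M → 0 < sInf (η '' Set.Icc ε M)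

open Finset Topology

lemma ClassB.exists_pos_le {η : ℝ → ℝ} (hη : ClassB η) {ε M : ℝ} (hε : 0 < ε) (hεM : ε ≤ M) :
    ∃ c, 0 < c ∧ ∀ r ∈ Set.Icc ε M, c ≤ η r := by
  have hpos := hη.2 ε M hε hεM
  have hbdd : BddBelow (η '' Set.Icc ε M) := by
    by_contra hb
    rw [Real.sInf_of_not_bddBelow hb] at hpos
    exact hpos.false
  exact ⟨_, hpos, fun r hr => csInf_le hbdd ⟨r, hr, rfl⟩⟩

lemma ClassB.tendsto_zero {η : ℝ → ℝ} (hη : ClassB η) {z α h : ℕ → ℝ} {L : ℝ}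
    (hz : ∀ t, 0 ≤ z t) (hα : ∀ t, 0 ≤ α t) (hαd : ¬ Summable α) (hh : ∀ t, η (z t) ≤ h t)
    (hαh : Summable fun t => α t * h t) (hzL : Tendsto z atTop (𝓝 L)) :
    Tendsto z atTop (𝓝 0) := by
  have hL : 0 ≤ L := ge_of_tendsto hzL (.of_forall hz)
  obtain rfl | hL := hL.eq_or_lt
  · exact hzL
  obtain ⟨c, hc, hηc⟩ := hη.exists_pos_le (half_pos hL) (by linarith : L / 2 ≤ 2 * L)
  refine absurd (Summable.of_norm_bounded_eventually_nat (hαh.mul_left c⁻¹) ?_) hαd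
  filter_upwards [hzL.eventually (Icc_mem_nhds (half_lt_self hL) (by linarith : L < 2 * L))]
    with t ht
  rw [Real.norm_of_nonneg (hα t), le_inv_mul_iff₀ hc, mul_comm]
  exact mul_le_mul_of_nonneg_left ((hηc _ ht).trans (hh t)) (hα t)

section

variable {Ω : Type*} {m0 : MeasurableSpace Ω} {μ : Measure Ω}

theorem MeasureTheory.Supermartingale.exists_ae_tendsto_of_forall_ge [IsFiniteMeasure μ]
    {ℱ : Filtration ℕ m0} {X : ℕ → Ω → ℝ} (hX : Supermartingale X ℱ μ) {b : ℝ}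
    (hb : ∀ᵐ ω ∂μ, ∀ t, b ≤ X t ω) :
    ∀ᵐ ω ∂μ, ∃ c, Tendsto (fun t => X t ω) atTop (𝓝 c) := by
  -- `|x| ≤ x + 2|b|` for `x ≥ b` bounds `X` in `L¹` by `𝔼[X 0] + 2|b|`.
  have hbdd (t : ℕ) : eLpNorm ((-X) t) 1 μ ≤
      (Real.toNNReal (∫ ω, X 0 ω ∂μ + 2 * |b| * μ.real Set.univ) : ENNReal) := by
    rw [Pi.neg_apply, eLpNorm_neg, eLpNorm_one_eq_lintegral_enorm,
      ← ofReal_integral_norm_eq_lintegral_enorm (hX.integrable t)]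
    refine ENNReal.ofReal_le_ofReal ?_
    calc ∫ ω, ‖X t ω‖ ∂μ ≤ ∫ ω, (X t ω + 2 * |b|) ∂μ := by
          refine integral_mono_ae (hX.integrable t).norm
            ((hX.integrable t).add (integrable_const _)) ?_
          filter_upwards [hb] with ω hω
          rw [Real.norm_eq_abs, abs_le]
          constructor <;> linarith [hω t, neg_abs_le b, le_abs_self b]
      _ = ∫ ω, X t ω ∂μ + 2 * |b| * μ.real Set.univ := by
          rw [integral_add (hX.integrable t) (integrable_const _), integral_const, smul_eq_mul,
            mul_comm]
      _ ≤ ∫ ω, X 0 ω ∂μ + 2 * |b| * μ.real Set.univ := by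
          simpa using hX.setIntegral_le t.zero_le MeasurableSet.univ
  filter_upwards [hX.neg.exists_ae_tendsto_of_bdd hbdd] with ω ⟨c, hc⟩
  exact ⟨-c, by simpa using hc.neg⟩

lemma condExp_mul_sub_mul_nonneg {m : MeasurableSpace Ω} (hm : m ≤ m0)
    [SigmaFinite (μ.trim hm)] {c b X : Ω → ℝ} (hc : StronglyMeasurable[m] c) (hc0 : 0 ≤ᵐ[μ] c)
    (hX : Integrable X μ) (hcX : Integrable (c * X) μ) (hcb : StronglyMeasurable[m] (c * b))
    (hcb_int : Integrable (c * b) μ) (hXb : μ[X|m] ≤ᵐ[μ] b) :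
    0 ≤ᵐ[μ] μ[c * b - c * X|m] := by
  filter_upwards [condExp_sub hcb_int hcX m, condExp_mul_of_stronglyMeasurable_left hc hcX hX,
    hc0, hXb] with ω hsub hmul hc0 hXb
  rw [hsub, Pi.sub_apply, condExp_of_stronglyMeasurable hm hcb hcb_int, hmul]
  simp only [Pi.mul_apply, Pi.zero_apply, sub_nonneg]
  exact mul_le_mul_of_nonneg_left hXb hc0

end

noncomputable section

namespace RobbinsSiegmund

section Deterministic

variable {f g a z : ℕ → ℝ}

def prodOneAdd (f : ℕ → ℝ) (t : ℕ) : ℝ := ∏ s ∈ range t, (1 + f s)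

lemma prodOneAdd_succ (f : ℕ → ℝ) (t : ℕ) :
    prodOneAdd f (t + 1) = prodOneAdd f t * (1 + f t) :=
  prod_range_succ _ _

lemma one_le_prodOneAdd (hf : ∀ t, 0 ≤ f t) (t : ℕ) : 1 ≤ prodOneAdd f t :=
  one_le_prod fun s _ => le_add_of_nonneg_right (hf s)

lemma prodOneAdd_pos (hf : ∀ t, 0 ≤ f t) (t : ℕ) : 0 < prodOneAdd f t :=
  one_pos.trans_le (one_le_prodOneAdd hf t)

lemma prodOneAdd_le_exp_tsum (hf : ∀ t, 0 ≤ f t) (hfs : Summable f) (t : ℕ) :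
    prodOneAdd f t ≤ Real.exp (∑' s, f s) :=
  (Real.prod_one_add_le_exp_sum _ hf).trans
    (Real.exp_le_exp.2 (hfs.sum_le_tsum _ fun s _ => hf s))

lemma exists_tendsto_prodOneAdd (hf : ∀ t, 0 ≤ f t) (hfs : Summable f) :
    ∃ P, Tendsto (prodOneAdd f) atTop (𝓝 P) :=
  ⟨_, tendsto_atTop_ciSup
    (monotone_nat_of_le_succ fun t => by
      rw [prodOneAdd_succ]
      exact le_mul_of_one_le_right (prodOneAdd_pos hf t).le (le_add_of_nonneg_right (hf t)))
    ⟨_, Set.forall_mem_range.2 (prodOneAdd_le_exp_tsum hf hfs)⟩⟩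

def recursionBound (f g a z : ℕ → ℝ) (t : ℕ) : ℝ := (1 + f t) * z t + g t - a t

def normalized (f g a z : ℕ → ℝ) (t : ℕ) : ℝ :=
  z t / prodOneAdd f t + ∑ s ∈ range t, (a s - g s) / prodOneAdd f (s + 1)

lemma normalized_succ_sub (hf : ∀ t, 0 ≤ f t) (t : ℕ) :
    normalized f g a z (t + 1) - normalized f g a z t =
      (z (t + 1) - recursionBound f g a z t) / prodOneAdd f (t + 1) := by
  have hP := (prodOneAdd_pos hf t).ne'
  have hf1 : 1 + f t ≠ 0 := by linarith [hf t]
  simp only [normalized, recursionBound, sum_range_succ, prodOneAdd_succ]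
  field_simp
  ring

lemma neg_sum_le_normalized (hf : ∀ t, 0 ≤ f t) (hg : ∀ t, 0 ≤ g t) (ha : ∀ t, 0 ≤ a t)
    (hz : ∀ t, 0 ≤ z t) (t : ℕ) :
    -∑ s ∈ range t, g s ≤ normalized f g a z t := by
  have hterm (s : ℕ) : -g s ≤ (a s - g s) / prodOneAdd f (s + 1) :=
    calc -g s ≤ -g s / prodOneAdd f (s + 1) := by
          rw [neg_div, neg_le_neg_iff]
          exact div_le_self (hg s) (one_le_prodOneAdd hf _)
      _ ≤ (a s - g s) / prodOneAdd f (s + 1) := by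
          gcongr
          · exact (prodOneAdd_pos hf _).le
          · linarith [ha s]
  have hz' : 0 ≤ z t / prodOneAdd f t := div_nonneg (hz t) (prodOneAdd_pos hf t).le
  rw [normalized, ← sum_neg_distrib]
  linarith [sum_le_sum fun s (_ : s ∈ range t) => hterm s]

lemma summable_div_prodOneAdd_of_bddAbove (hf : ∀ t, 0 ≤ f t) (hg : ∀ t, 0 ≤ g t)
    (ha : ∀ t, 0 ≤ a t) (hz : ∀ t, 0 ≤ z t)
    (hgs : Summable g) (hY : BddAbove (Set.range (normalized f g a z))) :
    Summable fun s => a s / prodOneAdd f (s + 1) := by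
  obtain ⟨B, hB⟩ := hY
  refine summable_of_sum_range_le (c := B + ∑' s, g s)
    (fun s => div_nonneg (ha s) (prodOneAdd_pos hf _).le) fun t => ?_
  have hY : normalized f g a z t ≤ B := hB ⟨t, rfl⟩
  have hz' : 0 ≤ z t / prodOneAdd f t := div_nonneg (hz t) (prodOneAdd_pos hf t).le
  have hg' : ∑ s ∈ range t, g s / prodOneAdd f (s + 1) ≤ ∑' s, g s :=
    (sum_le_sum fun s _ => div_le_self (hg s) (one_le_prodOneAdd hf _)).trans
      (hgs.sum_le_tsum _ fun s _ => hg s)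
  simp only [normalized, sub_div, sum_sub_distrib] at hY
  linarith

lemma summable_of_summable_div_prodOneAdd (hf : ∀ t, 0 ≤ f t) (ha : ∀ t, 0 ≤ a t)
    (hfs : Summable f)
    (has : Summable fun s => a s / prodOneAdd f (s + 1)) : Summable a :=
  .of_nonneg_of_le ha (fun s => by
      have hP := prodOneAdd_pos hf (s + 1)
      calc a s = a s / prodOneAdd f (s + 1) * prodOneAdd f (s + 1) := by field_simp
        _ ≤ a s / prodOneAdd f (s + 1) * Real.exp (∑' s, f s) := by
          gcongr
          · exact div_nonneg (ha s) hP.le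
          · exact prodOneAdd_le_exp_tsum hf hfs _)
    (has.mul_right _)

lemma exists_tendsto_of_tendsto_normalized (hf : ∀ t, 0 ≤ f t) (hg : ∀ t, 0 ≤ g t)
    (ha : ∀ t, 0 ≤ a t) (hz : ∀ t, 0 ≤ z t)
    (hfs : Summable f) (hgs : Summable g) {c : ℝ}
    (hY : Tendsto (normalized f g a z) atTop (𝓝 c)) : ∃ L, Tendsto z atTop (𝓝 L) := by
  obtain ⟨P, hP⟩ := exists_tendsto_prodOneAdd hf hfs
  have hsum : Summable fun s => (a s - g s) / prodOneAdd f (s + 1) := by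
    simp only [sub_div]
    exact (summable_div_prodOneAdd_of_bddAbove hf hg ha hz hgs hY.bddAbove_range).sub
      (.of_nonneg_of_le (fun s => div_nonneg (hg s) (prodOneAdd_pos hf _).le)
        (fun s => div_le_self (hg s) (one_le_prodOneAdd hf _)) hgs)
  refine ⟨_, ((hY.sub hsum.hasSum.tendsto_sum_nat).mul hP).congr fun t => ?_⟩
  rw [normalized, add_sub_cancel_right, div_mul_cancel₀ _ (prodOneAdd_pos hf t).ne']

def stepWeight (n : ℕ) (f g : ℕ → ℝ) (t : ℕ) : ℝ :=
  if ∑ s ∈ range (t + 1), g s ≤ n then (prodOneAdd f (t + 1))⁻¹ else 0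

/-- `normalized f g a z` stopped at the first `t` with `∑_{s ≤ t} g s > n`. -/
def localized (n : ℕ) (f g a z : ℕ → ℝ) (t : ℕ) : ℝ :=
  z 0 + ∑ s ∈ range t, stepWeight n f g s * (z (s + 1) - recursionBound f g a z s)

lemma localized_succ (n : ℕ) (f g a z : ℕ → ℝ) (t : ℕ) :
    localized n f g a z (t + 1) =
      localized n f g a z t + stepWeight n f g t * (z (t + 1) - recursionBound f g a z t) := by
  rw [localized, localized, sum_range_succ, add_assoc]

lemma stepWeight_nonneg (hf : ∀ t, 0 ≤ f t) (n : ℕ) (g : ℕ → ℝ) (t : ℕ) :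
    0 ≤ stepWeight n f g t := by
  unfold stepWeight
  split_ifs
  exacts [inv_nonneg.2 (prodOneAdd_pos hf _).le, le_rfl]

lemma stepWeight_le_one (hf : ∀ t, 0 ≤ f t) (n : ℕ) (g : ℕ → ℝ) (t : ℕ) :
    stepWeight n f g t ≤ 1 := by
  unfold stepWeight
  split_ifs
  exacts [inv_le_one_of_one_le₀ (one_le_prodOneAdd hf _), zero_le_one]

lemma stepWeight_mul_recursionBound_le (hf : ∀ t, 0 ≤ f t) (hg : ∀ t, 0 ≤ g t)
    (ha : ∀ t, 0 ≤ a t) (hz : ∀ t, 0 ≤ z t) (n t : ℕ) :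
    stepWeight n f g t * recursionBound f g a z t ≤ z t + n := by
  unfold stepWeight
  split_ifs with hn
  · have hP := prodOneAdd_pos hf t
    have hgn : g t ≤ n := (single_le_sum (fun s _ => hg s) (self_mem_range_succ t)).trans hn
    have hf1 : 1 + f t ≠ 0 := by linarith [hf t]
    have hsplit : (prodOneAdd f (t + 1))⁻¹ * recursionBound f g a z t =
        z t / prodOneAdd f t + (g t - a t) / prodOneAdd f (t + 1) := by
      rw [recursionBound, prodOneAdd_succ]
      field_simp
      ring
    have hz' : z t / prodOneAdd f t ≤ z t := div_le_self (hz t) (one_le_prodOneAdd hf t)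
    have hg' : (g t - a t) / prodOneAdd f (t + 1) ≤ g t :=
      (div_le_div_of_nonneg_right (by linarith [ha t]) (prodOneAdd_pos hf _).le).trans
        (div_le_self (hg t) (one_le_prodOneAdd hf _))
    linarith
  · linarith [hz t, n.cast_nonneg (α := ℝ)]

lemma localized_eq_normalized (hf : ∀ t, 0 ≤ f t) (hg : ∀ t, 0 ≤ g t) {n t : ℕ}
    (ht : ∑ s ∈ range t, g s ≤ n) : localized n f g a z t = normalized f g a z t := by
  induction t with
  | zero => simp [localized, normalized, prodOneAdd]
  | succ t ih =>
    rw [localized_succ, ih ((sum_le_sum_of_subset_of_nonneg (range_subset_range.2 t.le_succ)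
      fun s _ _ => hg s).trans ht), stepWeight, if_pos ht, inv_mul_eq_div,
      ← normalized_succ_sub hf, add_sub_cancel]

lemma neg_le_localized (hf : ∀ t, 0 ≤ f t) (hg : ∀ t, 0 ≤ g t) (ha : ∀ t, 0 ≤ a t)
    (hz : ∀ t, 0 ≤ z t) (n t : ℕ) : -(n : ℝ) ≤ localized n f g a z t := by
  suffices ∃ k, ∑ s ∈ range k, g s ≤ n ∧ localized n f g a z t = normalized f g a z k by
    obtain ⟨k, hk, hYk⟩ := this
    rw [hYk]
    exact (neg_le_neg hk).trans (neg_sum_le_normalized hf hg ha hz k)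
  induction t with
  | zero => exact ⟨0, by simp, by simp [localized, normalized, prodOneAdd]⟩
  | succ t ih =>
    by_cases ht : ∑ s ∈ range (t + 1), g s ≤ n
    · exact ⟨t + 1, ht, localized_eq_normalized hf hg ht⟩
    · obtain ⟨k, hk, hYk⟩ := ih
      refine ⟨k, hk, ?_⟩
      rw [localized_succ, stepWeight, if_neg ht, zero_mul, add_zero, hYk]

end Deterministic

section Stochastic

variable {Ω : Type*} {m0 : MeasurableSpace Ω} {μ : Measure Ω} {ℱ : Filtration ℕ m0}
  {z f g a : ℕ → Ω → ℝ}

lemma measurable_stepWeight (hf : Adapted ℱ f) (hg : Adapted ℱ g) (n t : ℕ) :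
    Measurable[ℱ t] fun ω => stepWeight n (f · ω) (g · ω) t := by
  have hmeas {x : ℕ → Ω → ℝ} (hx : Adapted ℱ x) (s : ℕ) (hs : s ∈ range (t + 1)) :
      Measurable[ℱ t] (x s) :=
    (hx s).mono (ℱ.mono (Nat.lt_succ_iff.1 (mem_range.1 hs))) le_rfl
  exact Measurable.ite (measurableSet_le (Finset.measurable_sum _ (hmeas hg)) measurable_const)
    (Finset.measurable_prod _ fun s hs => measurable_const.add (hmeas hf s hs)).inv
    measurable_const

lemma measurable_recursionBound (hz : Adapted ℱ z) (hf : Adapted ℱ f) (hg : Adapted ℱ g)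
    (ha : Adapted ℱ a) (t : ℕ) :
    Measurable[ℱ t] fun ω => recursionBound (f · ω) (g · ω) (a · ω) (z · ω) t :=
  (((measurable_const.add (hf t)).mul (hz t)).add (hg t)).sub (ha t)

lemma stronglyAdapted_localized (hz : Adapted ℱ z) (hf : Adapted ℱ f) (hg : Adapted ℱ g)
    (ha : Adapted ℱ a) (n : ℕ) :
    StronglyAdapted ℱ fun t ω => localized n (f · ω) (g · ω) (a · ω) (z · ω) t := by
  intro t
  refine Measurable.stronglyMeasurable (((hz 0).mono (ℱ.mono t.zero_le) le_rfl).add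
    (Finset.measurable_sum _ fun s hs => ?_))
  have hsucc : ℱ s ≤ ℱ (s + 1) := ℱ.mono s.le_succ
  have hincr : Measurable[ℱ (s + 1)] fun ω => stepWeight n (f · ω) (g · ω) s *
      (z (s + 1) ω - recursionBound (f · ω) (g · ω) (a · ω) (z · ω) s) :=
    ((measurable_stepWeight hf hg n s).mono hsucc le_rfl).mul
      ((hz (s + 1)).sub ((measurable_recursionBound hz hf hg ha s).mono hsucc le_rfl))
  exact hincr.mono (ℱ.mono (mem_range.1 hs)) le_rfl

lemma integrable_stepWeight_mul (hf : Adapted ℱ f) (hg : Adapted ℱ g)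
    (hf_nonneg : ∀ᵐ ω ∂μ, ∀ t, 0 ≤ f t ω) {X : Ω → ℝ} (hX : Integrable X μ) (n t : ℕ) :
    Integrable (fun ω => stepWeight n (f · ω) (g · ω) t * X ω) μ := by
  refine hX.bdd_mul (c := 1)
    ((measurable_stepWeight hf hg n t).mono (ℱ.le t) le_rfl).aestronglyMeasurable ?_
  filter_upwards [hf_nonneg] with ω hf
  rw [Real.norm_of_nonneg (stepWeight_nonneg hf _ _ _)]
  exact stepWeight_le_one hf _ _ _

lemma integrable_stepWeight_mul_recursionBound [IsFiniteMeasure μ] (hz : Adapted ℱ z)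
    (hf : Adapted ℱ f) (hg : Adapted ℱ g) (ha : Adapted ℱ a)
    (hz_nonneg : ∀ᵐ ω ∂μ, ∀ t, 0 ≤ z t ω) (hf_nonneg : ∀ᵐ ω ∂μ, ∀ t, 0 ≤ f t ω)
    (hg_nonneg : ∀ᵐ ω ∂μ, ∀ t, 0 ≤ g t ω) (ha_nonneg : ∀ᵐ ω ∂μ, ∀ t, 0 ≤ a t ω)
    {t : ℕ} (hz_int : Integrable (z t) μ)
    (hb : ∀ᵐ ω ∂μ, 0 ≤ recursionBound (f · ω) (g · ω) (a · ω) (z · ω) t) (n : ℕ) :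
    Integrable (fun ω => stepWeight n (f · ω) (g · ω) t *
      recursionBound (f · ω) (g · ω) (a · ω) (z · ω) t) μ := by
  refine (hz_int.add (integrable_const (n : ℝ))).mono'
    (((measurable_stepWeight hf hg n t).mul (measurable_recursionBound hz hf hg ha t)).mono
      (ℱ.le t) le_rfl).aestronglyMeasurable ?_
  filter_upwards [hz_nonneg, hf_nonneg, hg_nonneg, ha_nonneg, hb] with ω hz hf hg ha hb
  rw [Real.norm_of_nonneg (mul_nonneg (stepWeight_nonneg hf _ _ _) hb)]
  exact stepWeight_mul_recursionBound_le hf hg ha hz n t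

theorem supermartingale_localized [IsFiniteMeasure μ]
    (hz_nonneg : ∀ᵐ ω ∂μ, ∀ t, 0 ≤ z t ω) (hf_nonneg : ∀ᵐ ω ∂μ, ∀ t, 0 ≤ f t ω)
    (hg_nonneg : ∀ᵐ ω ∂μ, ∀ t, 0 ≤ g t ω) (ha_nonneg : ∀ᵐ ω ∂μ, ∀ t, 0 ≤ a t ω)
    (hz : Adapted ℱ z) (hf : Adapted ℱ f) (hg : Adapted ℱ g) (ha : Adapted ℱ a)
    (hz_int : ∀ t, Integrable (z t) μ)
    (hrec : ∀ t, ∀ᵐ ω ∂μ, μ[z (t + 1)|ℱ t] ω ≤ recursionBound (f · ω) (g · ω) (a · ω) (z · ω) t)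
    (n : ℕ) : Supermartingale (fun t ω => localized n (f · ω) (g · ω) (a · ω) (z · ω) t) ℱ μ := by
  set w : ℕ → Ω → ℝ := fun t ω => stepWeight n (f · ω) (g · ω) t
  set b : ℕ → Ω → ℝ := fun t ω => recursionBound (f · ω) (g · ω) (a · ω) (z · ω) t
  have hb_nonneg (t : ℕ) : ∀ᵐ ω ∂μ, 0 ≤ b t ω := by
    filter_upwards [condExp_nonneg (m := ℱ t) (hz_nonneg.mono fun ω hω => hω (t + 1)), hrec t]
      with ω h0 hle using h0.trans hle
  have hwz_int (t : ℕ) : Integrable (w t * z (t + 1)) μ :=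
    integrable_stepWeight_mul hf hg hf_nonneg (hz_int (t + 1)) n t
  have hwb_int (t : ℕ) : Integrable (w t * b t) μ :=
    integrable_stepWeight_mul_recursionBound hz hf hg ha hz_nonneg hf_nonneg hg_nonneg ha_nonneg
      (hz_int t) (hb_nonneg t) n
  refine supermartingale_of_condExp_sub_nonneg_nat (stronglyAdapted_localized hz hf hg ha n)
    (fun t => (hz_int 0).add (integrable_finsetSum _ fun s _ =>
      ((hwz_int s).sub (hwb_int s)).congr (.of_forall fun ω => (mul_sub _ _ _).symm))) fun t => ?_
  have hdiff : (fun ω => localized n (f · ω) (g · ω) (a · ω) (z · ω) t) -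
      (fun ω => localized n (f · ω) (g · ω) (a · ω) (z · ω) (t + 1)) =
      w t * b t - w t * z (t + 1) := by
    funext ω
    simp only [Pi.sub_apply, Pi.mul_apply, localized_succ, w, b]
    ring
  rw [hdiff]
  have hw := measurable_stepWeight hf hg n t
  exact condExp_mul_sub_mul_nonneg (ℱ.le t) hw.stronglyMeasurable
    (hf_nonneg.mono fun ω hω => stepWeight_nonneg hω _ _ _) (hz_int (t + 1)) (hwz_int t)
    (hw.mul (measurable_recursionBound hz hf hg ha t)).stronglyMeasurable (hwb_int t) (hrec t)

theorem ae_exists_tendsto_and_summable [IsFiniteMeasure μ]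
    (hz_nonneg : ∀ t, ∀ᵐ ω ∂μ, 0 ≤ z t ω) (hf_nonneg : ∀ t, ∀ᵐ ω ∂μ, 0 ≤ f t ω)
    (hg_nonneg : ∀ t, ∀ᵐ ω ∂μ, 0 ≤ g t ω) (ha_nonneg : ∀ t, ∀ᵐ ω ∂μ, 0 ≤ a t ω)
    (hz : Adapted ℱ z) (hf : Adapted ℱ f) (hg : Adapted ℱ g) (ha : Adapted ℱ a)
    (hz_int : ∀ t, Integrable (z t) μ)
    (hrec : ∀ t, ∀ᵐ ω ∂μ, μ[z (t + 1)|ℱ t] ω ≤ (1 + f t ω) * z t ω + g t ω - a t ω)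
    (hf_sum : ∀ᵐ ω ∂μ, Summable (f · ω)) (hg_sum : ∀ᵐ ω ∂μ, Summable (g · ω)) :
    ∀ᵐ ω ∂μ, (∃ L, Tendsto (z · ω) atTop (𝓝 L)) ∧ Summable (a · ω) := by
  rw [← ae_all_iff] at hz_nonneg hf_nonneg hg_nonneg ha_nonneg
  have hconv (n : ℕ) : ∀ᵐ ω ∂μ, ∃ c,
      Tendsto (fun t => localized n (f · ω) (g · ω) (a · ω) (z · ω) t) atTop (𝓝 c) :=
    (supermartingale_localized hz_nonneg hf_nonneg hg_nonneg ha_nonneg hz hf hg ha hz_int hrec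
      n).exists_ae_tendsto_of_forall_ge (b := -n) <| by
        filter_upwards [hz_nonneg, hf_nonneg, hg_nonneg, ha_nonneg] with ω hz hf hg ha
        exact neg_le_localized hf hg ha hz n
  filter_upwards [ae_all_iff.2 hconv, hz_nonneg, hf_nonneg, hg_nonneg, ha_nonneg, hf_sum, hg_sum]
    with ω hconv hz hf hg ha hfs hgs
  -- At a level `n ≥ Σ g`, the localized process never stops.
  obtain ⟨c, hc⟩ := hconv ⌈∑' t, g t ω⌉₊
  have hY : Tendsto (normalized (f · ω) (g · ω) (a · ω) (z · ω)) atTop (𝓝 c) :=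
    hc.congr fun t => localized_eq_normalized hf hg
      ((hgs.sum_le_tsum _ fun s _ => hg s).trans (Nat.le_ceil _))
  exact ⟨exists_tendsto_of_tendsto_normalized hf hg ha hz hfs hgs hY,
    summable_of_summable_div_prodOneAdd hf ha hfs
      (summable_div_prodOneAdd_of_bddAbove hf hg ha hz hgs hY.bddAbove_range)⟩

end Stochastic

end RobbinsSiegmund

end

/-- If the almost-supermartingale recursion holds with `Σ f_t < ∞`, `Σ g_t < ∞`,
`Σ α_t = ∞` a.s., and `h_t ≥ η(z_t)` for a Class B function `η`, then `z_t → 0` a.s. -/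
theorem sa_convergence_to_zero {Ω : Type*} {m0 : MeasurableSpace Ω}
    {μ : Measure Ω} [IsProbabilityMeasure μ]
    (ℱ : Filtration ℕ m0)
    (z f g h α : ℕ → Ω → ℝ)
    (hz_nonneg : ∀ t, ∀ᵐ ω ∂μ, 0 ≤ z t ω)
    (hf_nonneg : ∀ t, ∀ᵐ ω ∂μ, 0 ≤ f t ω)
    (hg_nonneg : ∀ t, ∀ᵐ ω ∂μ, 0 ≤ g t ω)
    (hh_nonneg : ∀ t, ∀ᵐ ω ∂μ, 0 ≤ h t ω)
    (hα_nonneg : ∀ t, ∀ᵐ ω ∂μ, 0 ≤ α t ω)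
    (hz_adapted : Adapted ℱ z) (hf_adapted : Adapted ℱ f)
    (hg_adapted : Adapted ℱ g) (hh_adapted : Adapted ℱ h)
    (hα_adapted : Adapted ℱ α)
    (hz_int : ∀ t, Integrable (z t) μ)
    (hrec : ∀ t, ∀ᵐ ω ∂μ,
      (μ[z (t + 1)|ℱ t]) ω ≤ (1 + f t ω) * z t ω + g t ω - α t ω * h t ω)
    (hf_sum : ∀ᵐ ω ∂μ, Summable (fun t => f t ω))
    (hg_sum : ∀ᵐ ω ∂μ, Summable (fun t => g t ω))
    (hα_div : ∀ᵐ ω ∂μ, ¬ Summable (fun t => α t ω))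
    (η : ℝ → ℝ) (hη : ClassB η)
    (hhη : ∀ t, ∀ᵐ ω ∂μ, η (z t ω) ≤ h t ω) :
    ∀ᵐ ω ∂μ, Tendsto (fun t => z t ω) atTop (nhds 0) := by
  have hαh_nonneg (t : ℕ) : ∀ᵐ ω ∂μ, 0 ≤ α t ω * h t ω := by
    filter_upwards [hα_nonneg t, hh_nonneg t] with ω using mul_nonneg
  have hrs := RobbinsSiegmund.ae_exists_tendsto_and_summable hz_nonneg hf_nonneg hg_nonneg
    hαh_nonneg hz_adapted hf_adapted hg_adapted (fun t => (hα_adapted t).mul (hh_adapted t))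
    hz_int hrec hf_sum hg_sum
  filter_upwards [hrs, ae_all_iff.2 hz_nonneg, ae_all_iff.2 hα_nonneg, hα_div,
    ae_all_iff.2 hhη] with ω ⟨⟨L, hL⟩, hαh⟩ hz hα hαd hhη
  exact hη.tendsto_zero hz hα hαd hhη hαh hL
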